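/- For all u ∈ 𝒱 and δu ∈ L²((0,T); ℝ³) with u + δu ∈ 𝒱, writing δψ^l(t) := ψ^l(t; u + δu) − ψ^l(t; u) and δv(t) := v(t; u + δu) − v(t; u), the following duality identity holds for each l = 1, …, s: (k_S/2) ∫₀ᵀ Re ⟨ψ^l(t; u), P_S δψ^l(t)⟩ dt = ∫₀ᵀ Im ⟨χ^l(t; u), H_Z(δv(t)) ψ^l(t; u)⟩ dt + ∫₀ᵀ Im ⟨χ^l(t; u), H_Z(δv(t)) δψ^l(t)⟩ dt. -/

import Mathlib

/-! Differentiate `ħ Re⟨χ, ψ(u + δu) - ψ(u)⟩` along the trajectories. Since `H* = Hᴴ`, the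
unperturbed Hamiltonian drops out of the derivative, which is
`-(k_S/2) Re⟨ψ, P_S δψ⟩ + Im⟨χ, H_Z(δv) ψ(u + δu)⟩`. Integrating over `[0, T]`, the boundary
terms vanish because `χ(T) = 0` and `δψ(0) = 0`. Every integrand is continuous on `[0, T]`, since
`v(·; u)` is the primitive of an integrable function. -/

open MeasureTheory Set

noncomputable section

/-- ℝ³ with the Euclidean norm. -/
abbrev E3 : Type := EuclideanSpace ℝ (Fin 3)

/-- membership in the box `V = ∏ [lo i, hi i]`. -/
def inBox (lo hi : Fin 3 → ℝ) (w : E3) : Prop :=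
  ∀ i, lo i ≤ w i ∧ w i ≤ hi i

/-- the admissible control set 𝒱 : L²((0,T);ℝ³) functions with values in the box a.e. -/
def Adm (T : ℝ) (lo hi : Fin 3 → ℝ) (u : ℝ → E3) : Prop :=
  MemLp u 2 (volume.restrict (Set.Ioc (0:ℝ) T)) ∧
    ∀ᵐ t ∂(volume.restrict (Set.Ioc (0:ℝ) T)), inBox lo hi (u t)

/-- the filtered field  v(t;u) = e^{−γt}(v₀ + ∫₀ᵗ γ e^{γτ} u(τ) dτ). -/
def vfield (γ : ℝ) (v0 : E3) (u : ℝ → E3) (t : ℝ) : E3 :=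
  Real.exp (-(γ * t)) • (v0 + ∫ τ in Set.Ioc (0:ℝ) t, (γ * Real.exp (γ * τ)) • u τ)

/-- the inner product ⟨a,b⟩ = ∑ conj(a j) * b j on ℂⁿ. -/
def cInner {n : ℕ} (a b : Fin n → ℂ) : ℂ := ∑ j, (starRingEnd ℂ) (a j) * b j

/-- the Euclidean norm on ℂⁿ. -/
def cNorm {n : ℕ} (a : Fin n → ℂ) : ℝ := Real.sqrt (∑ j, Complex.normSq (a j))

/-- Zeeman term H_Z(v) = μB g ∑ᵢ vᵢ (S1ᵢ + S2ᵢ). -/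
def HZmat {n : ℕ} (μB g : ℝ) (S1 S2 : Fin 3 → Matrix (Fin n) (Fin n) ℂ) (v : E3) :
    Matrix (Fin n) (Fin n) ℂ :=
  ((μB * g : ℝ) : ℂ) • ∑ i, ((v i : ℝ) : ℂ) • (S1 i + S2 i)

/-- K = (k_S P_S + k_T P_T)/2. -/
def Kmat {n : ℕ} (kS kT : ℝ) (PS PT : Matrix (Fin n) (Fin n) ℂ) : Matrix (Fin n) (Fin n) ℂ :=
  ((1 : ℂ) / 2) • ((kS : ℂ) • PS + (kT : ℂ) • PT)

/-- H(v) = H_Z(v) + H_hfi − iK. -/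
def Ham {n : ℕ} (μB g kS kT : ℝ) (S1 S2 : Fin 3 → Matrix (Fin n) (Fin n) ℂ)
    (Hhfi PS PT : Matrix (Fin n) (Fin n) ℂ) (v : E3) : Matrix (Fin n) (Fin n) ℂ :=
  HZmat μB g S1 S2 v + Hhfi - Complex.I • Kmat kS kT PS PT

/-- H*(v) = H_Z(v) + H_hfi + iK. -/
def HamStar {n : ℕ} (μB g kS kT : ℝ) (S1 S2 : Fin 3 → Matrix (Fin n) (Fin n) ℂ)
    (Hhfi PS PT : Matrix (Fin n) (Fin n) ℂ) (v : E3) : Matrix (Fin n) (Fin n) ℂ :=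
  HZmat μB g S1 S2 v + Hhfi + Complex.I • Kmat kS kT PS PT

/-- ψ solves iħ ψ' = Hm(t) ψ, ψ(0) = ψ0 (equivalently ψ' = (−i/ħ) Hm(t) ψ). -/
def IsSchrodingerSol {n : ℕ} (hbar : ℝ) (Hm : ℝ → Matrix (Fin n) (Fin n) ℂ)
    (ψ0 : Fin n → ℂ) (ψ : ℝ → Fin n → ℂ) : Prop :=
  ψ 0 = ψ0 ∧ ∀ t : ℝ, HasDerivAt ψ ((-Complex.I / (hbar : ℂ)) • (Hm t).mulVec (ψ t)) t

/-- χ solves iħ χ' = Hm(t) χ − i (k_S/2) P_S ψ(t), χ(T) = 0. -/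
def IsAdjointSol {n : ℕ} (T hbar kS : ℝ) (Hm : ℝ → Matrix (Fin n) (Fin n) ℂ)
    (PS : Matrix (Fin n) (Fin n) ℂ) (ψ χ : ℝ → Fin n → ℂ) : Prop :=
  χ T = 0 ∧ ∀ t : ℝ, HasDerivAt χ
    ((-Complex.I / (hbar : ℂ)) •
      ((Hm t).mulVec (χ t) - (Complex.I * ((kS : ℂ) / 2)) • PS.mulVec (ψ t))) t

/-- (ψ^l)_{l} is the family of state trajectories for control u. -/
def SchroSol {n s : ℕ} (γ hbar μB g kS kT : ℝ)
    (S1 S2 : Fin 3 → Matrix (Fin n) (Fin n) ℂ) (Hhfi PS PT : Matrix (Fin n) (Fin n) ℂ)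
    (v0 : E3) (ψT : Fin s → Fin n → ℂ) (u : ℝ → E3) (ψ : Fin s → ℝ → Fin n → ℂ) : Prop :=
  ∀ l, IsSchrodingerSol hbar
    (fun t => Ham μB g kS kT S1 S2 Hhfi PS PT (vfield γ v0 u t)) (ψT l) (ψ l)

/-- (χ^l)_{l} is the family of adjoint trajectories for control u and states ψ. -/
def AdjSol {n s : ℕ} (T γ hbar μB g kS kT : ℝ)
    (S1 S2 : Fin 3 → Matrix (Fin n) (Fin n) ℂ) (Hhfi PS PT : Matrix (Fin n) (Fin n) ℂ)
    (v0 : E3) (u : ℝ → E3) (ψ χ : Fin s → ℝ → Fin n → ℂ) : Prop :=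
  ∀ l, IsAdjointSol T hbar kS
    (fun t => HamStar μB g kS kT S1 S2 Hhfi PS PT (vfield γ v0 u t)) PS (ψ l) (χ l)

/-- the cost functional J expressed through the trajectories:
J = (k_S/(2s)) ∑_l ∫₀ᵀ ⟨ψ^l, P_S ψ^l⟩ dt. -/
def cost {n s : ℕ} (T kS : ℝ) (PS : Matrix (Fin n) (Fin n) ℂ)
    (ψ : Fin s → ℝ → Fin n → ℂ) : ℝ :=
  (kS / (2 * (s : ℝ))) * ∑ l, ∫ t in (0:ℝ)..T, (cInner (ψ l t) (PS.mulVec (ψ l t))).re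

/-- the switching function σ_{u,i}(t) = (2γμ_Bg/s) ∑_l ∫_t^T Im⟨χ^l(τ),(S1ᵢ+S2ᵢ)ψ^l(τ)⟩ e^{γ(t−τ)} dτ. -/
def swFn {n s : ℕ} (T γ μB g : ℝ) (S1 S2 : Fin 3 → Matrix (Fin n) (Fin n) ℂ)
    (ψ χ : Fin s → ℝ → Fin n → ℂ) (i : Fin 3) (t : ℝ) : ℝ :=
  (2 * γ * μB * g / (s : ℝ)) * ∑ l, ∫ τ in t..T,
    (cInner (χ l τ) ((S1 i + S2 i).mulVec (ψ l τ))).im * Real.exp (γ * (t - τ))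

open Matrix

section cInner

variable {n : ℕ}

theorem cInner_eq_star_dotProduct (a b : Fin n → ℂ) : cInner a b = star a ⬝ᵥ b := rfl

@[simp]
theorem cInner_zero_left (b : Fin n → ℂ) : cInner 0 b = 0 := by
  simp [cInner_eq_star_dotProduct]

@[simp]
theorem cInner_zero_right (a : Fin n → ℂ) : cInner a 0 = 0 :=
  dotProduct_zero _

theorem HasDerivAt.cInner {f g : ℝ → Fin n → ℂ} {f' g' : Fin n → ℂ} {t : ℝ}
    (hf : HasDerivAt f f' t) (hg : HasDerivAt g g' t) :
    HasDerivAt (fun t => cInner (f t) (g t)) (cInner f' (g t) + cInner (f t) g') t := by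
  simp only [cInner_eq_star_dotProduct, dotProduct, ← Finset.sum_add_distrib]
  refine HasDerivAt.fun_sum fun j _ => ?_
  simpa [add_comm] using
    ((hasDerivAt_pi.mp hf j).star).fun_mul (hasDerivAt_pi.mp hg j)

end cInner

section Duality

variable {n : ℕ} {ħ k : ℝ} {P : Matrix (Fin n) (Fin n) ℂ}

/-- `ħ · (d/dt) ⟨χ, ψb - ψ⟩` evaluated through the state and adjoint equations: the `H`-terms
cancel because `χ` is driven by `Hᴴ`. -/
theorem cInner_adjoint_increment (hħ : ħ ≠ 0) (hP : P.IsHermitian)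
    (H ΔH : Matrix (Fin n) (Fin n) ℂ) (χ ψ ψb : Fin n → ℂ) :
    ħ * (cInner ((-Complex.I / ħ) • (Hᴴ *ᵥ χ - (Complex.I * (k / 2)) • P *ᵥ ψ)) (ψb - ψ) +
        cInner χ ((-Complex.I / ħ) • (H + ΔH) *ᵥ ψb - (-Complex.I / ħ) • H *ᵥ ψ)) =
      -(k / 2) * cInner ψ (P *ᵥ (ψb - ψ)) -
        Complex.I * (cInner χ (ΔH *ᵥ ψ) + cInner χ (ΔH *ᵥ (ψb - ψ))) := by
  simp only [cInner_eq_star_dotProduct, star_smul, star_sub, star_mulVec, hP.eq,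
    conjTranspose_conjTranspose, smul_dotProduct, dotProduct_smul, sub_dotProduct,
    dotProduct_sub, add_mulVec, dotProduct_add, mulVec_sub, dotProduct_mulVec, smul_eq_mul,
    Complex.star_def, map_div₀, map_neg, map_mul, Complex.conj_I, Complex.conj_ofReal, map_ofNat]
  have hħ' : (ħ : ℂ) ≠ 0 := by exact_mod_cast hħ
  field_simp
  linear_combination (k * ((star ψ ᵥ* P) ⬝ᵥ ψb - (star ψ ᵥ* P) ⬝ᵥ ψ)) * Complex.I_sq

theorem hasDerivAt_re_cInner_increment (hħ : ħ ≠ 0) (hP : P.IsHermitian)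
    {H ΔH : Matrix (Fin n) (Fin n) ℂ} {ψ ψb χ : ℝ → Fin n → ℂ} {t : ℝ}
    (hψ : HasDerivAt ψ ((-Complex.I / ħ) • H *ᵥ ψ t) t)
    (hψb : HasDerivAt ψb ((-Complex.I / ħ) • (H + ΔH) *ᵥ ψb t) t)
    (hχ : HasDerivAt χ ((-Complex.I / ħ) • (Hᴴ *ᵥ χ t - (Complex.I * (k / 2)) • P *ᵥ ψ t)) t) :
    HasDerivAt (fun t => ħ * (cInner (χ t) (ψb t - ψ t)).re)
      (-(k / 2) * (cInner (ψ t) (P *ᵥ (ψb t - ψ t))).re +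
        ((cInner (χ t) (ΔH *ᵥ ψ t)).im + (cInner (χ t) (ΔH *ᵥ (ψb t - ψ t))).im)) t := by
  have h := (hχ.cInner (hψb.fun_sub hψ)).const_mul (ħ : ℂ)
  rw [cInner_adjoint_increment hħ hP] at h
  have h_re := Complex.reCLM.hasFDerivAt.comp_hasDerivAt t h
  simp only [Function.comp_def, Complex.reCLM_apply, Complex.re_ofReal_mul] at h_re
  refine h_re.congr_deriv ?_
  simp only [neg_mul, Complex.sub_re, Complex.neg_re, Complex.mul_re, Complex.div_ofNat_re,
    Complex.ofReal_re, Complex.div_ofNat_im, Complex.ofReal_im, zero_div, zero_mul, sub_zero,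
    Complex.I_re, Complex.add_re, Complex.I_im, Complex.add_im, one_mul, zero_sub]
  ring

theorem IsAdjointSol.integral_re_cInner_increment {T : ℝ} (hT : 0 ≤ T) (hħ : ħ ≠ 0)
    (hP : P.IsHermitian) {H ΔH : ℝ → Matrix (Fin n) (Fin n) ℂ} {ψ0 : Fin n → ℂ}
    {ψ ψb χ : ℝ → Fin n → ℂ} (hψ : IsSchrodingerSol ħ H ψ0 ψ)
    (hψb : IsSchrodingerSol ħ (H + ΔH) ψ0 ψb)
    (hχ : IsAdjointSol T ħ k (fun t => (H t)ᴴ) P ψ χ) (hΔH : ContinuousOn ΔH (Icc 0 T)) :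
    (k / 2) * ∫ t in (0:ℝ)..T, (cInner (ψ t) (P *ᵥ (ψb t - ψ t))).re =
      (∫ t in (0:ℝ)..T, (cInner (χ t) (ΔH t *ᵥ ψ t)).im) +
        ∫ t in (0:ℝ)..T, (cInner (χ t) (ΔH t *ᵥ (ψb t - ψ t))).im := by
  have hψc : Continuous ψ := Differentiable.continuous fun t => (hψ.2 t).differentiableAt
  have hψbc : Continuous ψb := Differentiable.continuous fun t => (hψb.2 t).differentiableAt
  have hχc : Continuous χ := Differentiable.continuous fun t => (hχ.2 t).differentiableAt
  have hX : IntervalIntegrable (fun t => (cInner (ψ t) (P *ᵥ (ψb t - ψ t))).re) volume 0 T := by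
    simp only [cInner_eq_star_dotProduct]
    exact Continuous.intervalIntegrable (by fun_prop) _ _
  have hY : ∀ φ : ℝ → Fin n → ℂ, Continuous φ →
      IntervalIntegrable (fun t => (cInner (χ t) (ΔH t *ᵥ φ t)).im) volume 0 T := by
    intro φ hφ
    simp only [cInner_eq_star_dotProduct]
    refine ContinuousOn.intervalIntegrable ?_
    rw [uIcc_of_le hT]
    fun_prop
  have hY1 := hY ψ hψc
  have hY2 := hY (fun t => ψb t - ψ t) (hψbc.sub hψc)
  have hFTC := intervalIntegral.integral_eq_sub_of_hasDerivAt
    (fun t _ => hasDerivAt_re_cInner_increment hħ hP (hψ.2 t) (hψb.2 t) (hχ.2 t))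
    ((hX.const_mul _).add (hY1.add hY2))
  rw [intervalIntegral.integral_add (hX.const_mul _) (hY1.add hY2),
    intervalIntegral.integral_add hY1 hY2, intervalIntegral.integral_const_mul,
    hχ.1, hψ.1, hψb.1] at hFTC
  simp only [sub_self, cInner_zero_left, cInner_zero_right, Complex.zero_re, mul_zero] at hFTC
  linarith

end Duality

section RadicalPair

variable {n : ℕ} {μB g kS kT : ℝ} {S1 S2 : Fin 3 → Matrix (Fin n) (Fin n) ℂ}
  {Hhfi PS PT : Matrix (Fin n) (Fin n) ℂ}

theorem HZmat_isHermitian (hS1 : ∀ i, (S1 i).IsHermitian) (hS2 : ∀ i, (S2 i).IsHermitian)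
    (v : E3) : (HZmat μB g S1 S2 v).IsHermitian := by
  simp only [HZmat, IsHermitian, conjTranspose_smul, conjTranspose_sum, conjTranspose_add,
    (hS1 _).eq, (hS2 _).eq, Complex.star_def, Complex.conj_ofReal]

theorem Kmat_isHermitian (hPS : PS.IsHermitian) (hPT : PT.IsHermitian) :
    (Kmat kS kT PS PT).IsHermitian := by
  simp only [Kmat, IsHermitian, conjTranspose_smul, conjTranspose_add, hPS.eq, hPT.eq,
    Complex.star_def, Complex.conj_ofReal, map_div₀, map_one, map_ofNat]

theorem HamStar_eq_conjTranspose_Ham (hS1 : ∀ i, (S1 i).IsHermitian)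
    (hS2 : ∀ i, (S2 i).IsHermitian) (hHhfi : Hhfi.IsHermitian) (hPS : PS.IsHermitian)
    (hPT : PT.IsHermitian) (v : E3) :
    HamStar μB g kS kT S1 S2 Hhfi PS PT v = (Ham μB g kS kT S1 S2 Hhfi PS PT v)ᴴ := by
  simp only [Ham, HamStar, conjTranspose_sub, conjTranspose_add, conjTranspose_smul,
    (HZmat_isHermitian hS1 hS2 v).eq, (Kmat_isHermitian hPS hPT).eq, hHhfi.eq,
    Complex.star_def, Complex.conj_I, neg_smul, sub_neg_eq_add]

theorem HZmat_sub (v w : E3) :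
    HZmat μB g S1 S2 (w - v) = HZmat μB g S1 S2 w - HZmat μB g S1 S2 v := by
  simp only [HZmat, PiLp.sub_apply, Complex.ofReal_sub, sub_smul, Finset.sum_sub_distrib,
    smul_sub]

theorem Ham_eq_add_HZmat_sub (v w : E3) :
    Ham μB g kS kT S1 S2 Hhfi PS PT w =
      Ham μB g kS kT S1 S2 Hhfi PS PT v + HZmat μB g S1 S2 (w - v) := by
  rw [HZmat_sub, Ham, Ham]
  abel

theorem continuous_HZmat : Continuous (HZmat μB g S1 S2) := by
  unfold HZmat
  fun_prop

end RadicalPair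

theorem continuousOn_vfield (γ : ℝ) (v0 : E3) {T : ℝ} {u : ℝ → E3}
    (hu : IntegrableOn u (Ioc 0 T)) : ContinuousOn (vfield γ v0 u) (Icc 0 T) := by
  have hγu : IntegrableOn (fun τ => (γ * Real.exp (γ * τ)) • u τ) (Icc 0 T) :=
    ((integrableOn_Icc_iff_integrableOn_Ioc (f := u)).2 hu).continuousOn_smul (by fun_prop)
      isCompact_Icc
  have := intervalIntegral.continuousOn_primitive hγu
  unfold vfield
  fun_prop

theorem Adm.integrableOn {T : ℝ} {lo hi : Fin 3 → ℝ} {u : ℝ → E3} (hu : Adm T lo hi u) :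
    IntegrableOn u (Ioc 0 T) :=
  hu.1.integrable one_le_two

theorem stmt_6_general
    {n s : ℕ}
    (T γ hbar μB g kS kT : ℝ) (hT : 0 < T) (hhbar : 0 < hbar)
    (S1 S2 : Fin 3 → Matrix (Fin n) (Fin n) ℂ) (Hhfi PS PT : Matrix (Fin n) (Fin n) ℂ)
    (hS1 : ∀ i, (S1 i).IsHermitian) (hS2 : ∀ i, (S2 i).IsHermitian)
    (hHhfi : Hhfi.IsHermitian) (hPS : PS.IsHermitian) (hPT : PT.IsHermitian)
    (lo hi : Fin 3 → ℝ)
    (v0 : E3) (ψT : Fin s → Fin n → ℂ) :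
    ∀ u δu : ℝ → E3, Adm T lo hi u → Adm T lo hi (u + δu) →
      ∀ ψ ψb χ : Fin s → ℝ → Fin n → ℂ,
        SchroSol γ hbar μB g kS kT S1 S2 Hhfi PS PT v0 ψT u ψ →
        SchroSol γ hbar μB g kS kT S1 S2 Hhfi PS PT v0 ψT (u + δu) ψb →
        AdjSol T γ hbar μB g kS kT S1 S2 Hhfi PS PT v0 u ψ χ →
        ∀ l, (kS / 2) * ∫ t in (0:ℝ)..T, (cInner (ψ l t) (PS.mulVec (ψb l t - ψ l t))).re =
          (∫ t in (0:ℝ)..T,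
            (cInner (χ l t) ((HZmat μB g S1 S2 (vfield γ v0 (u + δu) t - vfield γ v0 u t)).mulVec (ψ l t))).im) +
          ∫ t in (0:ℝ)..T,
            (cInner (χ l t) ((HZmat μB g S1 S2 (vfield γ v0 (u + δu) t - vfield γ v0 u t)).mulVec (ψb l t - ψ l t))).im := by
  intro u δu hu hub ψ ψb χ hψ hψb hχ l
  set H : ℝ → Matrix (Fin n) (Fin n) ℂ :=
    fun t => Ham μB g kS kT S1 S2 Hhfi PS PT (vfield γ v0 u t)
  set ΔH : ℝ → Matrix (Fin n) (Fin n) ℂ :=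
    fun t => HZmat μB g S1 S2 (vfield γ v0 (u + δu) t - vfield γ v0 u t)
  have hψb_split : IsSchrodingerSol hbar (H + ΔH) (ψT l) (ψb l) := by
    have hHam : H + ΔH = fun t => Ham μB g kS kT S1 S2 Hhfi PS PT (vfield γ v0 (u + δu) t) :=
      funext fun t => (Ham_eq_add_HZmat_sub _ _).symm
    rw [hHam]
    exact hψb l
  have hχ_adj : IsAdjointSol T hbar kS (fun t => (H t)ᴴ) PS (ψ l) (χ l) := by
    simp only [H, ← HamStar_eq_conjTranspose_Ham hS1 hS2 hHhfi hPS hPT]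
    exact hχ l
  have hΔH : ContinuousOn ΔH (Icc 0 T) :=
    continuous_HZmat.comp_continuousOn
      ((continuousOn_vfield γ v0 hub.integrableOn).sub (continuousOn_vfield γ v0 hu.integrableOn))
  exact hχ_adj.integral_re_cInner_increment hT.le hhbar.ne' hPS (hψ l) hψb_split hΔH

/-- duality identity relating state increment and adjoint trajectory. -/
theorem stmt_6
    {n s : ℕ} (hs : 0 < s)
    (T γ hbar μB g kS kT : ℝ) (hT : 0 < T) (hγ : 0 < γ) (hhbar : 0 < hbar)
    (hμB : 0 < μB) (hg : 0 < g) (hkS : 0 < kS) (hkT : 0 < kT)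
    (S1 S2 : Fin 3 → Matrix (Fin n) (Fin n) ℂ) (Hhfi PS PT : Matrix (Fin n) (Fin n) ℂ)
    (hS1 : ∀ i, (S1 i).IsHermitian) (hS2 : ∀ i, (S2 i).IsHermitian)
    (hHhfi : Hhfi.IsHermitian) (hPS : PS.IsHermitian) (hPT : PT.IsHermitian)
    (lo hi : Fin 3 → ℝ) (hbox : ∀ i, lo i ≤ hi i)
    (v0 : E3) (ψT : Fin s → Fin n → ℂ) :
    ∀ u δu : ℝ → E3, Adm T lo hi u → Adm T lo hi (u + δu) →
      ∀ ψ ψb χ : Fin s → ℝ → Fin n → ℂ,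
        SchroSol γ hbar μB g kS kT S1 S2 Hhfi PS PT v0 ψT u ψ →
        SchroSol γ hbar μB g kS kT S1 S2 Hhfi PS PT v0 ψT (u + δu) ψb →
        AdjSol T γ hbar μB g kS kT S1 S2 Hhfi PS PT v0 u ψ χ →
        ∀ l, (kS / 2) * ∫ t in (0:ℝ)..T, (cInner (ψ l t) (PS.mulVec (ψb l t - ψ l t))).re =
          (∫ t in (0:ℝ)..T,
            (cInner (χ l t) ((HZmat μB g S1 S2 (vfield γ v0 (u + δu) t - vfield γ v0 u t)).mulVec (ψ l t))).im) +
          ∫ t in (0:ℝ)..T,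
            (cInner (χ l t) ((HZmat μB g S1 S2 (vfield γ v0 (u + δu) t - vfield γ v0 u t)).mulVec (ψb l t - ψ l t))).im :=
  stmt_6_general T γ hbar μB g kS kT hT hhbar S1 S2 Hhfi PS PT hS1 hS2 hHhfi hPS hPT lo hi v0 ψT
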